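/- Let ρ_{ABC} be a positive definite density matrix on ℂᵃ ⊗ ℂᵇ ⊗ ℂᶜ such that A and B are conditionally independent given C, i.e., (I_A ⊗ ρ_{BC}^{-1/2}) ρ_{ABC} (I_A ⊗ ρ_{BC}^{-1/2}) equals ρ_{A|C} := (I_A ⊗ ρ_C^{-1/2}) ρ_{AC} (I_A ⊗ ρ_C^{-1/2}) extended by the identity on the B factor. Then the operators ρ_{A|C} and ρ_{B|C} := (I_B ⊗ ρ_C^{-1/2}) ρ_{BC} (I_B ⊗ ρ_C^{-1/2}), each extended by the identity on the missing tensor factor to operators on ℂᵃ ⊗ ℂᵇ ⊗ ℂᶜ, commute with one another. -/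

import Mathlib

open scoped BigOperators ComplexOrder

noncomputable section

open Classical in
/-- The inverse positive square root `M^{-1/2}` of a matrix (defined to be `0` if `M` is
not positive semidefinite). -/
def invSqrt {d : Type*} [Fintype d] [DecidableEq d] (M : Matrix d d ℂ) :
    Matrix d d ℂ :=
  if h : M.PosSemidef then
    ((h.1.eigenvectorUnitary : Matrix d d ℂ) *
      Matrix.diagonal (fun i => ((Real.sqrt (h.1.eigenvalues i) : ℝ) : ℂ)) *
      (star h.1.eigenvectorUnitary : Matrix d d ℂ))⁻¹ else 0

variable {a b c : ℕ}

/-- Partial trace over the `A` factor. -/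
def trA (ρ : Matrix (Fin a × Fin b × Fin c) (Fin a × Fin b × Fin c) ℂ) :
    Matrix (Fin b × Fin c) (Fin b × Fin c) ℂ :=
  fun p q => ∑ i : Fin a, ρ (i, p) (i, q)

/-- Partial trace over the `B` factor. -/
def trB (ρ : Matrix (Fin a × Fin b × Fin c) (Fin a × Fin b × Fin c) ℂ) :
    Matrix (Fin a × Fin c) (Fin a × Fin c) ℂ :=
  fun p q => ∑ j : Fin b, ρ (p.1, j, p.2) (q.1, j, q.2)

/-- Partial trace over the `A` and `B` factors. -/
def trAB (ρ : Matrix (Fin a × Fin b × Fin c) (Fin a × Fin b × Fin c) ℂ) :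
    Matrix (Fin c) (Fin c) ℂ :=
  fun k l => ∑ i : Fin a, ∑ j : Fin b, ρ (i, j, k) (i, j, l)

/-- Extend an operator on `B ⊗ C` by the identity on the `A` factor. -/
def liftBC (N : Matrix (Fin b × Fin c) (Fin b × Fin c) ℂ) :
    Matrix (Fin a × Fin b × Fin c) (Fin a × Fin b × Fin c) ℂ :=
  fun p q => if p.1 = q.1 then N p.2 q.2 else 0

/-- Extend an operator on `A ⊗ C` by the identity on the `B` factor. -/
def liftAC (N : Matrix (Fin a × Fin c) (Fin a × Fin c) ℂ) :
    Matrix (Fin a × Fin b × Fin c) (Fin a × Fin b × Fin c) ℂ :=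
  fun p q => if p.2.1 = q.2.1 then N (p.1, p.2.2) (q.1, q.2.2) else 0

/-- Extend an operator on `C` by the identity on the `A` factor, inside `A ⊗ C`. -/
def liftC_AC (N : Matrix (Fin c) (Fin c) ℂ) :
    Matrix (Fin a × Fin c) (Fin a × Fin c) ℂ :=
  fun p q => if p.1 = q.1 then N p.2 q.2 else 0

/-- Extend an operator on `C` by the identity on the `B` factor, inside `B ⊗ C`. -/
def liftC_BC (N : Matrix (Fin c) (Fin c) ℂ) :
    Matrix (Fin b × Fin c) (Fin b × Fin c) ℂ :=
  fun p q => if p.1 = q.1 then N p.2 q.2 else 0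

/-- The positive square root of a positive semidefinite matrix. -/
def Matrix.PosSemidef.sqrt {d : Type*} [Fintype d] [DecidableEq d] {M : Matrix d d ℂ}
    (h : M.PosSemidef) : Matrix d d ℂ :=
  (h.1.eigenvectorUnitary : Matrix d d ℂ) *
    Matrix.diagonal (fun i => ((Real.sqrt (h.1.eigenvalues i) : ℝ) : ℂ)) *
    (star h.1.eigenvectorUnitary : Matrix d d ℂ)

lemma Matrix.PosSemidef.posSemidef_sqrt {d : Type*} [Fintype d] [DecidableEq d]
    {M : Matrix d d ℂ} (h : M.PosSemidef) : h.sqrt.PosSemidef := by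
  have hD := (Matrix.posSemidef_diagonal_iff
    (d := fun i => ((Real.sqrt (h.1.eigenvalues i) : ℝ) : ℂ))).mpr
    (fun i => Complex.zero_le_real.mpr (Real.sqrt_nonneg _))
  exact hD.mul_mul_conjTranspose_same (h.1.eigenvectorUnitary : Matrix d d ℂ)

lemma Matrix.PosSemidef.sqrt_mul_self {d : Type*} [Fintype d] [DecidableEq d]
    {M : Matrix d d ℂ} (h : M.PosSemidef) : h.sqrt * h.sqrt = M := by
  set U : Matrix d d ℂ := (h.1.eigenvectorUnitary : Matrix d d ℂ) with hUd
  set D : Matrix d d ℂ :=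
    Matrix.diagonal (fun i => ((Real.sqrt (h.1.eigenvalues i) : ℝ) : ℂ)) with hDd
  have hU : (star h.1.eigenvectorUnitary : Matrix d d ℂ) * U = 1 :=
    Unitary.coe_star_mul_self _
  have h1 : h.sqrt * h.sqrt = U * (D * D) * (star h.1.eigenvectorUnitary : Matrix d d ℂ) := by
    calc h.sqrt * h.sqrt
        = U * D * ((star h.1.eigenvectorUnitary : Matrix d d ℂ) * U) * D
            * (star h.1.eigenvectorUnitary : Matrix d d ℂ) := by
          simp only [Matrix.PosSemidef.sqrt, Matrix.mul_assoc, hUd, hDd]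
      _ = _ := by rw [hU, Matrix.mul_one]; simp only [Matrix.mul_assoc]
  have h2 : D * D = Matrix.diagonal (RCLike.ofReal ∘ h.1.eigenvalues) := by
    rw [hDd, Matrix.diagonal_mul_diagonal]
    congr 1
    funext i
    simp only [Function.comp_apply]
    rw [← Complex.ofReal_mul, Real.mul_self_sqrt (h.eigenvalues_nonneg i)]
    rfl
  rw [h1, h2]
  conv_rhs => rw [h.1.spectral_theorem]
  rfl

namespace QCIAux

open Matrix

/-! ### Generic facts about traces of `A * Aᴴ` -/

lemma entry_nonneg {d : Type*} [Fintype d] (A : Matrix d d ℂ) (i : d) :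
    0 ≤ (A * Aᴴ) i i := by
  rw [Matrix.mul_apply]
  exact Finset.sum_nonneg fun j _ => by
    simpa [Matrix.conjTranspose_apply] using mul_star_self_nonneg (A i j)

lemma trace_mul_conjTranspose_nonneg {d : Type*} [Fintype d] (A : Matrix d d ℂ) :
    0 ≤ (A * Aᴴ).trace := by
  rw [Matrix.trace]
  exact Finset.sum_nonneg fun i _ => entry_nonneg A i

lemma eq_zero_of_trace_mul_conjTranspose {d : Type*} [Fintype d] {A : Matrix d d ℂ}
    (h : (A * Aᴴ).trace = 0) : A = 0 := by
  rw [Matrix.trace] at h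
  have h' := (Finset.sum_eq_zero_iff_of_nonneg fun i _ => entry_nonneg A i).mp h
  ext i j
  have hi := h' i (Finset.mem_univ i)
  simp only [Matrix.diag_apply, Matrix.mul_apply, Matrix.conjTranspose_apply] at hi
  have := (Finset.sum_eq_zero_iff_of_nonneg fun j _ =>
    mul_star_self_nonneg (A i j)).mp hi j (Finset.mem_univ j)
  rcases mul_eq_zero.mp this with h0 | h0
  · simpa using h0
  · simpa using star_eq_zero.mp h0

/-! ### The fixed point lemma -/

lemma fixed_point_commute {d ι : Type*} [Fintype d] [DecidableEq d] [Fintype ι]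
    (K : ι → Matrix d d ℂ) (W M : Matrix d d ℂ) (hW : W.PosDef)
    (hunital : ∑ α, K α * (K α)ᴴ = 1)
    (hinv : ∑ α, (K α)ᴴ * W * K α = W)
    (hfix : ∑ α, K α * M * (K α)ᴴ = M) :
    ∀ α, M * K α = K α * M := by
  have hfix' : ∑ α, K α * Mᴴ * (K α)ᴴ = Mᴴ := by
    have := congrArg conjTranspose hfix
    simpa [Matrix.conjTranspose_sum, Matrix.conjTranspose_mul, Matrix.mul_assoc] using this
  set X : ι → Matrix d d ℂ := fun α => M * K α - K α * M with hX
  have hD : ∑ α, X α * (X α)ᴴ = ∑ α, K α * (M * Mᴴ) * (K α)ᴴ - M * Mᴴ := by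
    have expand : ∀ α, X α * (X α)ᴴ =
        M * (K α * (K α)ᴴ) * Mᴴ - M * (K α * Mᴴ * (K α)ᴴ)
          - (K α * M * (K α)ᴴ) * Mᴴ + K α * (M * Mᴴ) * (K α)ᴴ := by
      intro α
      simp only [hX, Matrix.conjTranspose_sub, Matrix.conjTranspose_mul]
      noncomm_ring
    rw [Finset.sum_congr rfl fun α _ => expand α]
    simp only [Finset.sum_add_distrib, Finset.sum_sub_distrib,
      ← Matrix.mul_sum, ← Matrix.sum_mul, hunital, hfix, hfix']
    noncomm_ring
  have htr0 : ∑ α, (W * (X α * (X α)ᴴ)).trace = 0 := by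
    rw [← Matrix.trace_sum, ← Matrix.mul_sum, hD, Matrix.mul_sub, Matrix.trace_sub,
      Matrix.mul_sum, Matrix.trace_sum]
    have : ∀ α, (W * (K α * (M * Mᴴ) * (K α)ᴴ)).trace
        = ((K α)ᴴ * W * K α * (M * Mᴴ)).trace := by
      intro α
      rw [← Matrix.mul_assoc, Matrix.trace_mul_comm, ← Matrix.mul_assoc, ← Matrix.mul_assoc]
    rw [Finset.sum_congr rfl fun α _ => this α, ← Matrix.trace_sum, ← Matrix.sum_mul, hinv]
    simp
  set ws := hW.posSemidef.sqrt with hws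
  have hwsH : wsᴴ = ws := hW.posSemidef.posSemidef_sqrt.isHermitian
  have hW2 : ws * ws = W := hW.posSemidef.sqrt_mul_self
  have hwsd : IsUnit ws.det := by
    have : ws.det * ws.det = W.det := by rw [← Matrix.det_mul, hW2]
    have hWd : W.det ≠ 0 := hW.det_pos.ne'
    exact (IsUnit.mul_iff.mp (by rw [this]; exact hWd.isUnit)).1
  have key : ∀ A : Matrix d d ℂ, (W * (A * Aᴴ)).trace = ((ws * A) * (ws * A)ᴴ).trace := by
    intro A
    calc (W * (A * Aᴴ)).trace = ((A * Aᴴ) * W).trace := Matrix.trace_mul_comm _ _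
      _ = ((A * Aᴴ) * ws * ws).trace := by rw [Matrix.mul_assoc _ ws ws, hW2]
      _ = (ws * ((A * Aᴴ) * ws)).trace := (Matrix.trace_mul_comm _ _).symm
      _ = ((ws * A) * (ws * A)ᴴ).trace := by
          rw [Matrix.conjTranspose_mul, hwsH]; simp only [Matrix.mul_assoc]
  have hzero : ∀ α, (W * (X α * (X α)ᴴ)).trace = 0 := by
    intro α
    refine (Finset.sum_eq_zero_iff_of_nonneg fun β _ => ?_).mp htr0 α (Finset.mem_univ α)
    rw [key]; exact trace_mul_conjTranspose_nonneg _
  intro α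
  have h1 : ws * X α = 0 := by
    have := hzero α
    rw [key] at this
    exact eq_zero_of_trace_mul_conjTranspose this
  have h2 : X α = 0 := by
    have h1' : ws⁻¹ * (ws * X α) = ws⁻¹ * 0 := by rw [h1]
    rwa [← Matrix.mul_assoc, Matrix.nonsing_inv_mul _ hwsd, Matrix.one_mul,
      Matrix.mul_zero] at h1'
  exact sub_eq_zero.mp h2

/-! ### Sum-juggling helpers -/

lemma sum_rot {α β γ : Type*} [Fintype α] [Fintype β] [Fintype γ] (f : α → β → γ → ℂ) :
    ∑ x, ∑ y, ∑ z, f x y z = ∑ z, ∑ x, ∑ y, f x y z := by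
  calc ∑ x, ∑ y, ∑ z, f x y z = ∑ x, ∑ z, ∑ y, f x y z :=
        Finset.sum_congr rfl fun x _ => Finset.sum_comm
    _ = ∑ z, ∑ x, ∑ y, f x y z := Finset.sum_comm

lemma sum_rot4 {α β γ δ : Type*} [Fintype α] [Fintype β] [Fintype γ] [Fintype δ]
    (f : α → β → γ → δ → ℂ) :
    ∑ x, ∑ y, ∑ z, ∑ w, f x y z w = ∑ z, ∑ w, ∑ x, ∑ y, f x y z w := by
  calc ∑ x, ∑ y, ∑ z, ∑ w, f x y z w = ∑ z, ∑ x, ∑ y, ∑ w, f x y z w :=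
        sum_rot (fun x y z => ∑ w, f x y z w)
    _ = ∑ z, ∑ w, ∑ x, ∑ y, f x y z w :=
        Finset.sum_congr rfl fun z _ => sum_rot (fun x y w => f x y z w)

/-! ### `invSqrt` facts -/

lemma invSqrt_eq {d : Type*} [Fintype d] [DecidableEq d] {M : Matrix d d ℂ}
    (hM : M.PosSemidef) : invSqrt M = hM.sqrt⁻¹ := by
  rw [invSqrt, dif_pos hM]
  rfl

lemma sqrt_det_isUnit {d : Type*} [Fintype d] [DecidableEq d] {M : Matrix d d ℂ}
    (hM : M.PosDef) : IsUnit hM.posSemidef.sqrt.det := by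
  have h2 : hM.posSemidef.sqrt * hM.posSemidef.sqrt = M := hM.posSemidef.sqrt_mul_self
  have : hM.posSemidef.sqrt.det * hM.posSemidef.sqrt.det = M.det := by
    rw [← Matrix.det_mul, h2]
  exact (IsUnit.mul_iff.mp (by rw [this]; exact hM.det_pos.ne'.isUnit)).1

lemma sqrt_mul_invSqrt {d : Type*} [Fintype d] [DecidableEq d] {M : Matrix d d ℂ}
    (hM : M.PosDef) : hM.posSemidef.sqrt * invSqrt M = 1 := by
  rw [invSqrt_eq hM.posSemidef, Matrix.mul_nonsing_inv _ (sqrt_det_isUnit hM)]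

lemma invSqrt_mul_sqrt {d : Type*} [Fintype d] [DecidableEq d] {M : Matrix d d ℂ}
    (hM : M.PosDef) : invSqrt M * hM.posSemidef.sqrt = 1 := by
  rw [invSqrt_eq hM.posSemidef, Matrix.nonsing_inv_mul _ (sqrt_det_isUnit hM)]

lemma invSqrt_herm {d : Type*} [Fintype d] [DecidableEq d] {M : Matrix d d ℂ}
    (hM : M.PosDef) : (invSqrt M)ᴴ = invSqrt M := by
  rw [invSqrt_eq hM.posSemidef, Matrix.conjTranspose_nonsing_inv,
    hM.posSemidef.posSemidef_sqrt.isHermitian.eq]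

lemma invSqrt_mul_self_mul {d : Type*} [Fintype d] [DecidableEq d] {M : Matrix d d ℂ}
    (hM : M.PosDef) : invSqrt M * M * invSqrt M = 1 := by
  have h : invSqrt M * (hM.posSemidef.sqrt * hM.posSemidef.sqrt) * invSqrt M = 1 := by
    rw [← Matrix.mul_assoc, invSqrt_mul_sqrt hM, Matrix.one_mul, sqrt_mul_invSqrt hM]
  rwa [hM.posSemidef.sqrt_mul_self] at h

/-! ### Lift algebra -/

lemma liftBC_mul (P Q : Matrix (Fin b × Fin c) (Fin b × Fin c) ℂ) :
    (liftBC (a:=a) (P * Q)) = liftBC P * liftBC Q := by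
  ext ⟨i,j,k⟩ ⟨i',j',k'⟩
  simp [liftBC, Matrix.mul_apply, Fintype.sum_prod_type, ite_and, Finset.sum_ite_eq,
    mul_ite, ite_mul, zero_mul, mul_zero]

lemma liftBC_one : liftBC (a:=a) (1 : Matrix (Fin b × Fin c) (Fin b × Fin c) ℂ) = 1 := by
  ext ⟨i,j,k⟩ ⟨i',j',k'⟩
  simp [liftBC, Matrix.one_apply, Prod.ext_iff, ite_and]

lemma liftC_AC_mul (P Q : Matrix (Fin c) (Fin c) ℂ) :
    liftC_AC (a:=a) (P * Q) = liftC_AC P * liftC_AC Q := by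
  ext ⟨i,k⟩ ⟨i',k'⟩
  simp [liftC_AC, Matrix.mul_apply, Fintype.sum_prod_type, ite_and, Finset.sum_ite_eq,
    mul_ite, ite_mul, zero_mul, mul_zero]

lemma liftC_AC_one : liftC_AC (a:=a) (1 : Matrix (Fin c) (Fin c) ℂ) = 1 := by
  ext ⟨i,k⟩ ⟨i',k'⟩
  simp [liftC_AC, Matrix.one_apply, Prod.ext_iff, ite_and]

lemma liftC_AC_conjT (P : Matrix (Fin c) (Fin c) ℂ) :
    (liftC_AC (a:=a) P)ᴴ = liftC_AC Pᴴ := by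
  ext ⟨i,k⟩ ⟨i',k'⟩
  simp [liftC_AC, Matrix.conjTranspose_apply, eq_comm]
  split <;> simp

lemma liftC_AC_sum {ι : Type*} [Fintype ι] (f : ι → Matrix (Fin c) (Fin c) ℂ) :
    liftC_AC (a:=a) (∑ x, f x) = ∑ x, liftC_AC (f x) := by
  ext ⟨i,k⟩ ⟨i',k'⟩
  simp only [liftC_AC, Matrix.sum_apply]
  split <;> simp [liftC_AC, *]

/-! ### Blocks of matrices on `B ⊗ C` -/

/-- The `(j, j')` block (a matrix on the `C` factor) of a matrix on `B ⊗ C`. -/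
def blk (P : Matrix (Fin b × Fin c) (Fin b × Fin c) ℂ) (j j' : Fin b) :
    Matrix (Fin c) (Fin c) ℂ := fun k k' => P (j, k) (j', k')

lemma blk_mul (P Q : Matrix (Fin b × Fin c) (Fin b × Fin c) ℂ) (j j' : Fin b) :
    blk (P * Q) j j' = ∑ j1, blk P j j1 * blk Q j1 j' := by
  ext k k'
  simp only [blk, Matrix.mul_apply, Fintype.sum_prod_type, Matrix.sum_apply]

lemma blk_conjT (P : Matrix (Fin b × Fin c) (Fin b × Fin c) ℂ) (j j' : Fin b)
    (hP : Pᴴ = P) : (blk P j j')ᴴ = blk P j' j := by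
  ext k k'
  simp [blk, Matrix.conjTranspose_apply]
  conv_rhs => rw [← hP]
  simp [Matrix.conjTranspose_apply]

lemma blk_lift_mul (t u : Matrix (Fin c) (Fin c) ℂ)
    (S : Matrix (Fin b × Fin c) (Fin b × Fin c) ℂ) (j j' : Fin b) :
    blk (liftC_BC t * S * liftC_BC u) j j' = t * blk S j j' * u := by
  ext k k'
  simp [blk, liftC_BC, Matrix.mul_apply, Fintype.sum_prod_type, ite_and, Finset.sum_ite_eq,
    mul_ite, ite_mul, zero_mul, mul_zero, Finset.sum_ite_eq']

lemma sum_blk_trA (ρ : Matrix (Fin a × Fin b × Fin c) (Fin a × Fin b × Fin c) ℂ) :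
    ∑ j, blk (trA ρ) j j = trAB ρ := by
  ext k k'
  simp only [Matrix.sum_apply, blk, trA, trAB]
  rw [Finset.sum_comm]

/-! ### Partial trace computations -/

lemma trB_conj (P Q : Matrix (Fin b × Fin c) (Fin b × Fin c) ℂ)
    (X : Matrix (Fin a × Fin c) (Fin a × Fin c) ℂ) :
    trB (liftBC P * liftAC X * liftBC Q)
      = ∑ j : Fin b, ∑ j1 : Fin b, liftC_AC (blk P j j1) * X * liftC_AC (blk Q j1 j) := by
  ext ⟨i,k⟩ ⟨i',k'⟩
  simp only [trB, blk, liftBC, liftAC, liftC_AC, Matrix.mul_apply, Matrix.sum_apply,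
    Fintype.sum_prod_type, ite_and, Finset.sum_ite_eq, Finset.sum_ite_eq',
    mul_ite, ite_mul, zero_mul, mul_zero, Finset.sum_ite_irrel, Finset.sum_const_zero,
    Finset.mem_univ, if_true]

lemma commute_reduction (M : Matrix (Fin a × Fin c) (Fin a × Fin c) ℂ)
    (N : Matrix (Fin b × Fin c) (Fin b × Fin c) ℂ)
    (h : ∀ j j' : Fin b, M * liftC_AC (blk N j j') = liftC_AC (blk N j j') * M) :
    liftAC M * liftBC N = liftBC N * liftAC M := by
  ext ⟨i,j,k⟩ ⟨i',j',k'⟩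
  have h' := congrArg (fun T => T (i,k) (i',k')) (h j j')
  simp only [Matrix.mul_apply, liftC_AC, blk, Fintype.sum_prod_type, ite_and,
    Finset.sum_ite_eq, Finset.sum_ite_eq', mul_ite, ite_mul, zero_mul, mul_zero,
    Finset.mem_univ, if_true] at h'
  simp only [Matrix.mul_apply, liftAC, liftBC, Fintype.sum_prod_type, ite_and,
    Finset.sum_ite_eq, Finset.sum_ite_eq', mul_ite, ite_mul, zero_mul, mul_zero,
    Finset.sum_ite_irrel, Finset.sum_const_zero, Finset.mem_univ, if_true]
  simp only [Finset.sum_ite_irrel, Finset.sum_const_zero, Finset.sum_ite_eq,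
    Finset.sum_ite_eq', Finset.mem_univ, if_true] at h'
  exact h'

/-! ### Positive definiteness of marginals -/

lemma trA_posDef {ρ : Matrix (Fin a × Fin b × Fin c) (Fin a × Fin b × Fin c) ℂ}
    (hρ : ρ.PosDef) [Nonempty (Fin a)] : (trA ρ).PosDef := by
  refine Matrix.PosDef.of_dotProduct_mulVec_pos ?_ ?_
  · ext p q
    simp only [conjTranspose_apply, trA, star_sum]
    refine Finset.sum_congr rfl fun i _ => ?_
    conv_rhs => rw [← hρ.1]
    simp [conjTranspose_apply]
  · intro x hx
    set y : Fin a → (Fin a × Fin b × Fin c) → ℂ :=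
      fun i q => if q.1 = i then x q.2 else 0 with hy
    have hterm : ∀ i, star (y i) ⬝ᵥ ρ *ᵥ (y i)
        = ∑ p, ∑ q, star (x p) * (ρ (i,p) (i,q) * x q) := by
      intro i
      simp only [dotProduct, mulVec, hy, Fintype.sum_prod_type, Pi.star_apply,
        apply_ite (star : ℂ → ℂ), star_zero, ite_mul, zero_mul, mul_ite, mul_zero,
        Finset.sum_ite_eq, Finset.sum_ite_eq', Finset.sum_ite_irrel, Finset.sum_const_zero,
        Finset.mem_univ, if_true, Finset.mul_sum]
    have hform : star x ⬝ᵥ (trA ρ) *ᵥ x = ∑ i, star (y i) ⬝ᵥ ρ *ᵥ (y i) := by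
      rw [Finset.sum_congr rfl fun i _ => hterm i]
      simp only [dotProduct, mulVec, trA, Pi.star_apply, Finset.sum_mul, Finset.mul_sum]
      rw [sum_rot (fun p q i => star (x p) * (ρ (i,p) (i,q) * x q))]
    rw [hform]
    obtain ⟨p0, hp0⟩ := Function.ne_iff.mp hx
    refine Finset.sum_pos (fun i _ => hρ.dotProduct_mulVec_pos (x := y i) ?_) Finset.univ_nonempty
    refine Function.ne_iff.mpr ⟨(i, p0), ?_⟩
    simpa [hy] using hp0

lemma trAB_posDef {ρ : Matrix (Fin a × Fin b × Fin c) (Fin a × Fin b × Fin c) ℂ}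
    (hρ : ρ.PosDef) [Nonempty (Fin a)] [Nonempty (Fin b)] : (trAB ρ).PosDef := by
  refine Matrix.PosDef.of_dotProduct_mulVec_pos ?_ ?_
  · ext p q
    simp only [conjTranspose_apply, trAB, star_sum]
    refine Finset.sum_congr rfl fun i _ => Finset.sum_congr rfl fun j _ => ?_
    conv_rhs => rw [← hρ.1]
    simp [conjTranspose_apply]
  · intro x hx
    set y : Fin a × Fin b → (Fin a × Fin b × Fin c) → ℂ :=
      fun α q => if q.1 = α.1 ∧ q.2.1 = α.2 then x q.2.2 else 0 with hy
    have hterm : ∀ α : Fin a × Fin b, star (y α) ⬝ᵥ ρ *ᵥ (y α)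
        = ∑ k, ∑ k', star (x k) * (ρ (α.1, α.2, k) (α.1, α.2, k') * x k') := by
      intro α
      simp only [dotProduct, mulVec, hy, Fintype.sum_prod_type, Pi.star_apply, ite_and,
        apply_ite (star : ℂ → ℂ), star_zero, ite_mul, zero_mul, mul_ite, mul_zero,
        Finset.sum_ite_eq, Finset.sum_ite_eq', Finset.sum_ite_irrel, Finset.sum_const_zero,
        Finset.mem_univ, if_true, Finset.mul_sum]
    have hform : star x ⬝ᵥ (trAB ρ) *ᵥ x = ∑ α, star (y α) ⬝ᵥ ρ *ᵥ (y α) := by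
      rw [Finset.sum_congr rfl fun α _ => hterm α]
      simp only [dotProduct, mulVec, trAB, Pi.star_apply, Finset.sum_mul, Finset.mul_sum,
        Fintype.sum_prod_type]
      rw [sum_rot4 (fun k k' i j => star (x k) * (ρ (i, j, k) (i, j, k') * x k'))]
    rw [hform]
    obtain ⟨p0, hp0⟩ := Function.ne_iff.mp hx
    refine Finset.sum_pos (fun α _ => hρ.dotProduct_mulVec_pos (x := y α) ?_) Finset.univ_nonempty
    refine Function.ne_iff.mpr ⟨(α.1, α.2, p0), ?_⟩
    simpa [hy] using hp0

lemma liftC_AC_posDef {τ : Matrix (Fin c) (Fin c) ℂ} (hτ : τ.PosDef) [Nonempty (Fin a)] :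
    (liftC_AC (a:=a) τ).PosDef := by
  refine Matrix.PosDef.of_dotProduct_mulVec_pos ?_ ?_
  · ext ⟨i,k⟩ ⟨i',k'⟩
    simp only [conjTranspose_apply, liftC_AC, apply_ite (star : ℂ → ℂ), star_zero, eq_comm]
    split
    · conv_rhs => rw [← hτ.1]
      simp [conjTranspose_apply]
    · rfl
  · intro x hx
    have hform : star x ⬝ᵥ (liftC_AC (a:=a) τ) *ᵥ x
        = ∑ i, star (fun k => x (i,k)) ⬝ᵥ τ *ᵥ (fun k => x (i,k)) := by
      simp only [dotProduct, Matrix.mulVec, liftC_AC, Fintype.sum_prod_type, Pi.star_apply,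
        ite_mul, mul_ite, zero_mul, mul_zero, Finset.sum_ite_eq, Finset.sum_ite_eq',
        Finset.sum_ite_irrel, Finset.sum_const_zero, Finset.mem_univ, if_true]
    rw [hform]
    obtain ⟨⟨i0,k0⟩, hp0⟩ := Function.ne_iff.mp hx
    refine Finset.sum_pos' (fun i _ => hτ.posSemidef.dotProduct_mulVec_nonneg _) ⟨i0, Finset.mem_univ i0, ?_⟩
    refine hτ.dotProduct_mulVec_pos (Function.ne_iff.mpr ⟨k0, ?_⟩)
    simpa using hp0

lemma trB_herm {ρ : Matrix (Fin a × Fin b × Fin c) (Fin a × Fin b × Fin c) ℂ}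
    (hρ : ρ.IsHermitian) : (trB ρ)ᴴ = trB ρ := by
  ext p q
  simp only [conjTranspose_apply, trB, star_sum]
  refine Finset.sum_congr rfl fun j _ => ?_
  conv_rhs => rw [← hρ]
  simp [conjTranspose_apply]

end QCIAux

open QCIAux Matrix in

/-- If `A` and `B` are conditionally independent given `C` for a
positive definite tripartite density matrix `ρ_{ABC}` (i.e. `ρ_{A|BC} = ρ_{A|C} ⊗ I_B`),
then the operators `ρ_{A|C}` and `ρ_{B|C}`, each extended by the identity on the missing
tensor factor, commute. -/
theorem quantum_conditional_independence_commute
    (ρ : Matrix (Fin a × Fin b × Fin c) (Fin a × Fin b × Fin c) ℂ)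
    (hρ : ρ.PosDef) (htr : ρ.trace = 1)
    (hCI : liftBC (invSqrt (trA ρ)) * ρ * liftBC (invSqrt (trA ρ))
        = liftAC (liftC_AC (invSqrt (trAB ρ)) * trB ρ * liftC_AC (invSqrt (trAB ρ)))) :
    Commute
      (liftAC (liftC_AC (invSqrt (trAB ρ)) * trB ρ * liftC_AC (invSqrt (trAB ρ))))
      (liftBC (liftC_BC (invSqrt (trAB ρ)) * trA ρ * liftC_BC (invSqrt (trAB ρ)))) := by
  classical
  -- the index types are nonempty
  have hne : Nonempty (Fin a × Fin b × Fin c) := by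
    by_contra h
    rw [not_nonempty_iff] at h
    rw [Matrix.trace] at htr
    simp [Finset.univ_eq_empty] at htr
  haveI : Nonempty (Fin a) := ⟨hne.some.1⟩
  haveI : Nonempty (Fin b) := ⟨hne.some.2.1⟩
  -- positive definite marginals
  have hσ : (trA ρ).PosDef := trA_posDef hρ
  have hτ : (trAB ρ).PosDef := trAB_posDef hρ
  set ti : Matrix (Fin c) (Fin c) ℂ := invSqrt (trAB ρ) with hti
  set sq : Matrix (Fin b × Fin c) (Fin b × Fin c) ℂ := hσ.posSemidef.sqrt with hsqd
  set M : Matrix (Fin a × Fin c) (Fin a × Fin c) ℂ :=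
    liftC_AC ti * trB ρ * liftC_AC ti with hM
  set N : Matrix (Fin b × Fin c) (Fin b × Fin c) ℂ :=
    liftC_BC ti * trA ρ * liftC_BC ti with hN
  have hsqH : sqᴴ = sq := hσ.posSemidef.posSemidef_sqrt.isHermitian
  have htiH : tiᴴ = ti := invSqrt_herm hτ
  have hsq2 : sq * sq = trA ρ := hσ.posSemidef.sqrt_mul_self
  have htiti : ti * trAB ρ * ti = 1 := invSqrt_mul_self_mul hτ
  -- reconstruct ρ from the conditional independence hypothesis
  have hρeq : liftBC (a:=a) sq * liftAC M * liftBC sq = ρ := by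
    rw [← hCI]
    simp only [← Matrix.mul_assoc]
    rw [← liftBC_mul, sqrt_mul_invSqrt hσ, liftBC_one, Matrix.one_mul,
      Matrix.mul_assoc, ← liftBC_mul, invSqrt_mul_sqrt hσ, liftBC_one, Matrix.mul_one]
  -- partial trace over B gives a fixed point equation
  have htrB : trB ρ
      = ∑ j : Fin b, ∑ j1 : Fin b, liftC_AC (blk sq j j1) * M * liftC_AC (blk sq j1 j) := by
    rw [← hρeq, trB_conj]
  -- the Kraus operators
  set K : Fin b × Fin b → Matrix (Fin a × Fin c) (Fin a × Fin c) ℂ :=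
    fun α => liftC_AC (ti * blk sq α.1 α.2) with hK
  have hKH : ∀ α : Fin b × Fin b, (K α)ᴴ = liftC_AC (blk sq α.2 α.1 * ti) := by
    intro α
    rw [hK]
    simp only [liftC_AC_conjT, Matrix.conjTranspose_mul, htiH, blk_conjT sq _ _ hsqH]
  have hAA : ∑ j : Fin b, ∑ j' : Fin b, blk sq j j' * blk sq j' j = trAB ρ := by
    calc ∑ j : Fin b, ∑ j' : Fin b, blk sq j j' * blk sq j' j
        = ∑ j, blk (sq * sq) j j :=
          Finset.sum_congr rfl fun j _ => (blk_mul sq sq j j).symm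
      _ = ∑ j, blk (trA ρ) j j := by rw [hsq2]
      _ = trAB ρ := sum_blk_trA ρ
  -- unitality
  have hunital : ∑ α : Fin b × Fin b, K α * (K α)ᴴ = 1 := by
    have h1 : ∀ α : Fin b × Fin b, K α * (K α)ᴴ
        = liftC_AC (ti * (blk sq α.1 α.2 * blk sq α.2 α.1) * ti) := by
      intro α
      rw [hKH α]
      simp only [hK]
      rw [← liftC_AC_mul]
      refine congrArg liftC_AC ?_
      noncomm_ring
    rw [Finset.sum_congr rfl fun α _ => h1 α, ← liftC_AC_sum]
    have h2 : ∑ α : Fin b × Fin b, ti * (blk sq α.1 α.2 * blk sq α.2 α.1) * ti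
        = ti * trAB ρ * ti := by
      rw [← Finset.sum_mul, ← Finset.mul_sum]
      congr 1
      congr 1
      rw [← hAA, Fintype.sum_prod_type]
    rw [h2, htiti, liftC_AC_one]
  -- invariance of the weight
  have hinv : ∑ α : Fin b × Fin b, (K α)ᴴ * liftC_AC (a:=a) (trAB ρ) * K α
      = liftC_AC (trAB ρ) := by
    have h1 : ∀ α : Fin b × Fin b, (K α)ᴴ * liftC_AC (a:=a) (trAB ρ) * K α
        = liftC_AC (blk sq α.2 α.1 * blk sq α.1 α.2) := by
      intro α
      rw [hKH α]
      simp only [hK]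
      rw [← liftC_AC_mul, ← liftC_AC_mul]
      refine congrArg liftC_AC ?_
      calc blk sq α.2 α.1 * ti * trAB ρ * (ti * blk sq α.1 α.2)
          = blk sq α.2 α.1 * (ti * trAB ρ * ti) * blk sq α.1 α.2 := by noncomm_ring
        _ = blk sq α.2 α.1 * blk sq α.1 α.2 := by rw [htiti]; noncomm_ring
    rw [Finset.sum_congr rfl fun α _ => h1 α, ← liftC_AC_sum]
    refine congrArg liftC_AC ?_
    rw [← hAA, Fintype.sum_prod_type]
    exact Finset.sum_comm
  -- the fixed point equation
  have hfix : ∑ α : Fin b × Fin b, K α * M * (K α)ᴴ = M := by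
    have h1 : ∀ α : Fin b × Fin b, K α * M * (K α)ᴴ
        = liftC_AC ti * (liftC_AC (blk sq α.1 α.2) * M * liftC_AC (blk sq α.2 α.1))
            * liftC_AC ti := by
      intro α
      rw [hKH α]
      simp only [hK]
      rw [liftC_AC_mul, liftC_AC_mul]
      noncomm_ring
    rw [Finset.sum_congr rfl fun α _ => h1 α]
    rw [← Finset.sum_mul, ← Finset.mul_sum]
    rw [Fintype.sum_prod_type, ← htrB, ← hM]
  -- apply the fixed point lemma
  have hcomm : ∀ α, M * K α = K α * M :=
    fixed_point_commute K (liftC_AC (trAB ρ)) M (liftC_AC_posDef hτ) hunital hinv hfix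
  have hMH : Mᴴ = M := by
    rw [hM]
    simp only [Matrix.conjTranspose_mul, liftC_AC_conjT, htiH, trB_herm hρ.1,
      Matrix.mul_assoc]
  have hcommH : ∀ α, M * (K α)ᴴ = (K α)ᴴ * M := by
    intro α
    have := congrArg conjTranspose (hcomm α)
    simp only [Matrix.conjTranspose_mul, hMH] at this
    exact this.symm
  -- conclude
  show liftAC M * liftBC N = liftBC N * liftAC M
  refine commute_reduction M N fun j j' => ?_
  have hblk : liftC_AC (a:=a) (blk N j j') = ∑ j1 : Fin b, K (j, j1) * (K (j', j1))ᴴ := by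
    rw [hN, blk_lift_mul]
    have : blk (trA ρ) j j' = ∑ j1, blk sq j j1 * blk sq j1 j' := by
      rw [← hsq2, blk_mul]
    rw [this, Finset.mul_sum, Finset.sum_mul, liftC_AC_sum]
    refine Finset.sum_congr rfl fun j1 _ => ?_
    rw [hKH]
    simp only [hK]
    rw [← liftC_AC_mul]
    refine congrArg liftC_AC ?_
    noncomm_ring
  rw [hblk, Finset.mul_sum, Finset.sum_mul]
  refine Finset.sum_congr rfl fun j1 _ => ?_
  calc M * (K (j, j1) * (K (j', j1))ᴴ)
      = M * K (j, j1) * (K (j', j1))ᴴ := (Matrix.mul_assoc M _ _).symm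
    _ = K (j, j1) * M * (K (j', j1))ᴴ := by rw [hcomm]
    _ = K (j, j1) * (M * (K (j', j1))ᴴ) := Matrix.mul_assoc _ M _
    _ = K (j, j1) * ((K (j', j1))ᴴ * M) := by rw [hcommH]
    _ = K (j, j1) * (K (j', j1))ᴴ * M := (Matrix.mul_assoc _ _ M).symm

end
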